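/- Product-of-diagonal lower bound: if A is an n×n Hermitian positive semidefinite matrix, then per(A) ≥ e^{−γn} ∏_{i=1}^n A_{ii}, where γ is the Euler–Mascheroni constant. -/

import Mathlib

/-!
Since `γ ≥ 0`, it suffices to prove Marcus's inequality `∏ i, A i i ≤ per A` for positive
semidefinite `A`, by induction on `n`. Expanding `per A` along the first column, and each minor
along the first row, gives `per A = a₀₀ per B + ∑ⱼ ∑ₖ conj a₀ⱼ a₀ₖ per B⁽ʲᵏ⁾`, where `B` is `A` with
its first row and column removed and `B⁽ʲᵏ⁾` is `B` with row `j` and column `k` removed. Writing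
`B = Xᴴ X`, the Cauchy–Binet formula for permanents turns `(n - 2)!` times the double sum into
`∑_g |∑ₖ a₀ₖ per X⁽ᵍᵏ⁾|²`, where `g` runs over all maps into the rows of `X` and `X⁽ᵍᵏ⁾` takes
the rows `g` and all columns but `k`; this is nonnegative.
-/

open Equiv Finset
open scoped ComplexOrder MatrixOrder Nat

namespace Matrix

section CommSemiring

variable {R : Type*} [CommSemiring R] {ι κ : Type*} [Fintype ι] [Fintype κ]

theorem permanent_mul_eq_sum [DecidableEq ι] (X : Matrix ι κ R) (Y : Matrix κ ι R) :
    (X * Y).permanent = ∑ g : ι → κ, (X.submatrix id g).permanent * ∏ i, Y (g i) i := by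
  simp only [permanent, mul_apply, prod_univ_sum, Fintype.piFinset_univ, prod_mul_distrib,
    submatrix_apply, id, sum_mul]
  exact sum_comm

theorem factorial_mul_permanent_mul [DecidableEq ι] (X : Matrix ι κ R) (Y : Matrix κ ι R) :
    (Fintype.card ι)! * (X * Y).permanent =
      ∑ g : ι → κ, (X.submatrix id g).permanent * (Y.submatrix g id).permanent := by
  have reindex (τ : Perm ι) :
      ∑ g : ι → κ, (X.submatrix id g).permanent * ∏ i, Y (g (τ i)) i = (X * Y).permanent := by
    rw [permanent_mul_eq_sum]
    refine Fintype.sum_equiv (τ.symm.arrowCongr (Equiv.refl κ)) _ _ fun g => ?_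
    rw [← permanent_permute_rows τ (X.submatrix id g)]
    rfl
  calc (Fintype.card ι)! * (X * Y).permanent
      = ∑ τ : Perm ι, ∑ g : ι → κ, (X.submatrix id g).permanent * ∏ i, Y (g (τ i)) i := by
        simp only [reindex, sum_const, card_univ, Fintype.card_perm, nsmul_eq_mul]
    _ = _ := by
        rw [sum_comm]
        simp only [permanent, submatrix_apply, id, mul_sum]

theorem permanent_conjTranspose [DecidableEq ι] [StarRing R] (M : Matrix ι ι R) :
    Mᴴ.permanent = star M.permanent := by
  rw [← permanent_transpose]
  simp only [permanent, star_sum, star_prod, transpose_apply, conjTranspose_apply]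

theorem permanent_succ_column_zero {n : ℕ} (A : Matrix (Fin (n + 1)) (Fin (n + 1)) R) :
    A.permanent = ∑ i, A i 0 * (A.submatrix i.succAbove Fin.succ).permanent := by
  rw [permanent, univ_perm_fin_succ, ← univ_product_univ]
  simp only [sum_map, toEmbedding_apply, sum_product]
  refine sum_congr rfl fun p _ => Fin.cases ?_ (fun i => ?_) p
  · simp only [Fin.prod_univ_succ, Perm.decomposeFin_symm_apply_zero,
      Perm.decomposeFin_symm_apply_succ, swap_self, refl_apply, Fin.succAbove_zero, permanent,
      mul_sum, submatrix_apply]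
  · simp only [Fin.prod_univ_succ, Perm.decomposeFin_symm_apply_zero,
      Perm.decomposeFin_symm_apply_succ, permanent, mul_sum, submatrix_apply]
    refine sum_bij (fun σ _ => i.cycleRange • σ) (fun _ _ => mem_univ _)
      (fun _ _ _ _ h => smul_left_cancel _ h)
      (fun τ _ => ⟨i.cycleRange⁻¹ • τ, mem_univ _, by simp⟩) fun σ _ => ?_
    congr 1
    refine prod_congr rfl fun x _ => ?_
    rw [← Fin.succAbove_cycleRange]
    rfl

theorem permanent_succ_row_zero {n : ℕ} (A : Matrix (Fin (n + 1)) (Fin (n + 1)) R) :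
    A.permanent = ∑ j, A 0 j * (A.submatrix Fin.succ j.succAbove).permanent := by
  rw [← permanent_transpose A, permanent_succ_column_zero]
  simp only [transpose_apply, ← permanent_transpose (A.submatrix Fin.succ _)]
  rfl

end CommSemiring

section RCLike

variable {𝕜 : Type*} [RCLike 𝕜] {ι κ μ ρ : Type*} [Fintype ι] [Fintype κ] [Fintype ρ]

theorem sum_star_mul_mul_permanent_conjTranspose_mul_nonneg [DecidableEq ι]
    (X : Matrix κ μ 𝕜) (f : ρ → ι → μ) (c : ρ → 𝕜) :
    0 ≤ ∑ j, ∑ k, star (c j) * c k *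
      ((X.submatrix id (f j))ᴴ * X.submatrix id (f k)).permanent := by
  set s : (ι → κ) → 𝕜 := fun g => ∑ k, c k * (X.submatrix g (f k)).permanent
  have cauchy_binet (j k : ρ) :
      (Fintype.card ι)! * ((X.submatrix id (f j))ᴴ * X.submatrix id (f k)).permanent =
        ∑ g : ι → κ, star (X.submatrix g (f j)).permanent * (X.submatrix g (f k)).permanent := by
    rw [factorial_mul_permanent_mul]
    simp only [← permanent_conjTranspose]
    rfl
  have sum_sq : (Fintype.card ι)! * ∑ j, ∑ k, star (c j) * c k *
      ((X.submatrix id (f j))ᴴ * X.submatrix id (f k)).permanent = ∑ g, star (s g) * s g := by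
    calc _ = ∑ j, ∑ k, ∑ g : ι → κ, star (c j) * c k *
            (star (X.submatrix g (f j)).permanent * (X.submatrix g (f k)).permanent) := by
          simp only [mul_sum, mul_left_comm ((Fintype.card ι)! : 𝕜), cauchy_binet]
      _ = ∑ g, ∑ j, ∑ k, star (c j * (X.submatrix g (f j)).permanent) *
            (c k * (X.submatrix g (f k)).permanent) := by
          rw [eq_comm, sum_comm]
          refine sum_congr rfl fun j _ => ?_
          rw [sum_comm]
          refine sum_congr rfl fun k _ => sum_congr rfl fun g _ => ?_
          rw [star_mul']
          ring
      _ = ∑ g, star (s g) * s g := by simp only [s, star_sum, sum_mul_sum]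
  refine le_of_mul_le_mul_left ?_ (Nat.cast_pos.mpr (Nat.factorial_pos (Fintype.card ι)))
  rw [mul_zero, sum_sq]
  exact sum_nonneg fun g _ => star_mul_self_nonneg (s g)

theorem PosSemidef.sum_star_mul_mul_permanent_submatrix_nonneg [DecidableEq ι] [Fintype μ]
    [DecidableEq μ] {B : Matrix μ μ 𝕜} (hB : B.PosSemidef) (f : ρ → ι → μ) (c : ρ → 𝕜) :
    0 ≤ ∑ j, ∑ k, star (c j) * c k * (B.submatrix (f j) (f k)).permanent := by
  obtain ⟨X, rfl⟩ := CStarAlgebra.nonneg_iff_eq_star_mul_self.mp hB.nonneg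
  convert sum_star_mul_mul_permanent_conjTranspose_mul_nonneg X f c using 6
  ext
  simp [mul_apply]

theorem PosSemidef.mul_permanent_submatrix_succ_le_permanent {n : ℕ}
    {A : Matrix (Fin (n + 1)) (Fin (n + 1)) 𝕜} (hA : A.PosSemidef) :
    A 0 0 * (A.submatrix Fin.succ Fin.succ).permanent ≤ A.permanent := by
  rw [permanent_succ_column_zero A, Fin.sum_univ_succ, Fin.succAbove_zero]
  refine le_add_of_nonneg_right ?_
  cases n with
  | zero => simp
  | succ n =>
    convert (hA.submatrix Fin.succ).sum_star_mul_mul_permanent_submatrix_nonneg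
      (fun i : Fin (n + 1) => i.succAbove) (fun k => A 0 k.succ) using 2 with i
    rw [permanent_succ_row_zero, mul_sum, ← hA.isHermitian.apply]
    refine sum_congr rfl fun k _ => ?_
    simp [Function.comp_def, Fin.succ_succAbove_succ, mul_assoc]

theorem PosSemidef.prod_diag_le_permanent {n : ℕ} {A : Matrix (Fin n) (Fin n) 𝕜}
    (hA : A.PosSemidef) : ∏ i, A i i ≤ A.permanent := by
  induction n with
  | zero => simp [permanent_isEmpty]
  | succ n ih =>
    calc ∏ i, A i i = A 0 0 * ∏ i : Fin n, A i.succ i.succ := Fin.prod_univ_succ _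
      _ ≤ A 0 0 * (A.submatrix Fin.succ Fin.succ).permanent :=
        mul_le_mul_of_nonneg_left (ih (hA.submatrix _)) hA.diag_nonneg
      _ ≤ A.permanent := hA.mul_permanent_submatrix_succ_le_permanent

end RCLike

end Matrix

theorem stmt18 {n : ℕ} (A : Matrix (Fin n) (Fin n) ℂ) (hA : A.PosSemidef) :
    (Real.exp (-(Real.eulerMascheroniConstant * n)) : ℂ) * ∏ i, A i i ≤
      A.permanent := by
  have exp_le_one : (Real.exp (-(Real.eulerMascheroniConstant * n)) : ℂ) ≤ 1 := by
    rw [← Complex.ofReal_one, Complex.real_le_real, Real.exp_le_one_iff, neg_nonpos]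
    exact mul_nonneg (one_half_pos.trans Real.one_half_lt_eulerMascheroniConstant).le n.cast_nonneg
  calc (Real.exp (-(Real.eulerMascheroniConstant * n)) : ℂ) * ∏ i, A i i
      ≤ ∏ i, A i i :=
        mul_le_of_le_one_left (prod_nonneg fun i _ => hA.diag_nonneg) exp_le_one
    _ ≤ A.permanent := hA.prod_diag_le_permanent
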